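/- Let Re > 0 be a real constant and define u(x, y, t) = 3/4 − 1/(4[1 + exp((−4x + 4y − t)·Re/32)]) and v(x, y, t) = 3/4 + 1/(4[1 + exp((−4x + 4y − t)·Re/32)]). Then v satisfies the second equation of the two-dimensional Burgers system, ∂_t v + u·∂_x v + v·∂_y v = (1/Re)(∂²_x v + ∂²_y v), at every point (x, y, t) ∈ R² × R. -/

import Mathlib

/-!
Both velocities are travelling waves in the phase `ξ = (-4x + 4y - t) Re / 32`: `v = W(ξ)` and
`u = 3/2 - W(ξ)` for the profile `W s = 3/4 + 1 / (4 (1 + eˢ))`. The profile satisfies the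
first-order equation `W' = (4W - 3)(W - 1)`, hence `W'' = (8W - 7) W'`, and with the phase slopes
`-Re/32`, `-Re/8`, `Re/8` in `t`, `x`, `y` both sides of the equation reduce to
`(Re / 32)(8W - 7) W'`.
-/

open Real

noncomputable def burgersProfile (s : ℝ) : ℝ :=
  3 / 4 + 1 / (4 * (1 + exp s))

theorem hasDerivAt_burgersProfile (s : ℝ) :
    HasDerivAt burgersProfile
      ((4 * burgersProfile s - 3) * (burgersProfile s - 1)) s := by
  have hpos : 4 * (1 + exp s) ≠ 0 := by positivity
  have h : HasDerivAt burgersProfile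
      ((0 * (4 * (1 + exp s)) - 1 * (4 * exp s)) / (4 * (1 + exp s)) ^ 2) s :=
    ((hasDerivAt_const s 1).div (((hasDerivAt_exp s).const_add 1).const_mul 4) hpos).const_add
      (3 / 4)
  convert h using 1
  simp only [burgersProfile]
  field_simp
  ring

theorem differentiable_burgersProfile : Differentiable ℝ burgersProfile :=
  fun s => (hasDerivAt_burgersProfile s).differentiableAt

theorem deriv_burgersProfile :
    deriv burgersProfile = fun s => (4 * burgersProfile s - 3) * (burgersProfile s - 1) :=
  funext fun s => (hasDerivAt_burgersProfile s).deriv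

theorem differentiable_deriv_burgersProfile : Differentiable ℝ (deriv burgersProfile) := by
  rw [deriv_burgersProfile]
  have hW := differentiable_burgersProfile
  fun_prop

theorem deriv_deriv_burgersProfile (s : ℝ) :
    deriv (deriv burgersProfile) s = (8 * burgersProfile s - 7) * deriv burgersProfile s := by
  have hW := hasDerivAt_burgersProfile s
  set D := (4 * burgersProfile s - 3) * (burgersProfile s - 1)
  have h : HasDerivAt (fun s => (4 * burgersProfile s - 3) * (burgersProfile s - 1))
      (4 * D * (burgersProfile s - 1) + (4 * burgersProfile s - 3) * D) s :=
    ((hW.const_mul 4).sub_const 3).mul (hW.sub_const 1)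
  rw [deriv_burgersProfile, h.deriv]
  ring

section AffineChainRule

variable {f ξ : ℝ → ℝ} {a : ℝ}

theorem deriv_comp_affine (hf : Differentiable ℝ f) (hξ : ∀ s, HasDerivAt ξ a s) (s : ℝ) :
    deriv (fun s => f (ξ s)) s = a * deriv f (ξ s) := by
  have h : HasDerivAt (fun s => f (ξ s)) (deriv f (ξ s) * a) s := (hf _).hasDerivAt.comp s (hξ s)
  rw [h.deriv, mul_comm]

theorem deriv_deriv_comp_affine (hf : Differentiable ℝ f) (hf' : Differentiable ℝ (deriv f))
    (hξ : ∀ s, HasDerivAt ξ a s) (s : ℝ) :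
    deriv (deriv fun s => f (ξ s)) s = a ^ 2 * deriv (deriv f) (ξ s) := by
  have h : HasDerivAt (fun s => a * deriv f (ξ s)) (a * (deriv (deriv f) (ξ s) * a)) s :=
    ((hf' _).hasDerivAt.comp s (hξ s)).const_mul a
  rw [funext (deriv_comp_affine hf hξ), h.deriv]
  ring

end AffineChainRule

theorem burgers_2d_second_equation_general (Re : ℝ) :
    let u : ℝ → ℝ → ℝ → ℝ := fun x y t =>
      3 / 4 - 1 / (4 * (1 + Real.exp ((-4 * x + 4 * y - t) * Re / 32)))
    let v : ℝ → ℝ → ℝ → ℝ := fun x y t =>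
      3 / 4 + 1 / (4 * (1 + Real.exp ((-4 * x + 4 * y - t) * Re / 32)))
    ∀ x y t : ℝ,
      deriv (fun t' => v x y t') t
        + u x y t * deriv (fun x' => v x' y t) x
        + v x y t * deriv (fun y' => v x y' t) y
      = (1 / Re) * (deriv (deriv fun x' => v x' y t) x
          + deriv (deriv fun y' => v x y' t) y) := by
  intro u v x y t
  have hξt : ∀ s, HasDerivAt (fun t' => (-4 * x + 4 * y - t') * Re / 32) (-Re / 32) s := fun s =>
    ((((hasDerivAt_id' s).const_sub (-4 * x + 4 * y)).mul_const Re).div_const 32).congr_deriv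
      (by ring)
  have hξx : ∀ s, HasDerivAt (fun x' => (-4 * x' + 4 * y - t) * Re / 32) (-Re / 8) s := fun s =>
    ((((((hasDerivAt_id' s).const_mul (-4)).add_const (4 * y)).sub_const t).mul_const
      Re).div_const 32).congr_deriv (by ring)
  have hξy : ∀ s, HasDerivAt (fun y' => (-4 * x + 4 * y' - t) * Re / 32) (Re / 8) s := fun s =>
    ((((((hasDerivAt_id' s).const_mul 4).const_add (-4 * x)).sub_const t).mul_const
      Re).div_const 32).congr_deriv (by ring)
  have hW := differentiable_burgersProfile
  have hW' := differentiable_deriv_burgersProfile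
  have hu : u x y t = 3 / 2 - burgersProfile ((-4 * x + 4 * y - t) * Re / 32) := by
    simp only [u, burgersProfile]
    ring
  have hv : v = fun x y t => burgersProfile ((-4 * x + 4 * y - t) * Re / 32) := rfl
  simp only [hv]
  rw [deriv_comp_affine hW hξt, deriv_comp_affine hW hξx, deriv_comp_affine hW hξy,
    deriv_deriv_comp_affine hW hW' hξx, deriv_deriv_comp_affine hW hW' hξy, hu,
    deriv_deriv_burgersProfile]
  set ξ := (-4 * x + 4 * y - t) * Re / 32
  linear_combination
    (-(8 * burgersProfile ξ - 7) * deriv burgersProfile ξ / 32) * inv_mul_mul_self Re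

/-- The exact solution `v` of the 2D Burgers system satisfies the second equation
`∂ₜv + u ∂ₓv + v ∂_y v = (1/Re)(∂ₓ²v + ∂_y²v)` at every point of `ℝ² × ℝ`. -/
theorem burgers_2d_second_equation (Re : ℝ) (hRe : 0 < Re) :
    let u : ℝ → ℝ → ℝ → ℝ := fun x y t =>
      3 / 4 - 1 / (4 * (1 + Real.exp ((-4 * x + 4 * y - t) * Re / 32)))
    let v : ℝ → ℝ → ℝ → ℝ := fun x y t =>
      3 / 4 + 1 / (4 * (1 + Real.exp ((-4 * x + 4 * y - t) * Re / 32)))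
    ∀ x y t : ℝ,
      deriv (fun t' => v x y t') t
        + u x y t * deriv (fun x' => v x' y t) x
        + v x y t * deriv (fun y' => v x y' t) y
      = (1 / Re) * (deriv (deriv fun x' => v x' y t) x
          + deriv (deriv fun y' => v x y' t) y) :=
  burgers_2d_second_equation_general Re
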